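/- Let d ≥ 5 be an integer. In ℝ^d (no dilatons) consider the electric wall form w_E = e₁ + e₂ + e₃ of a 3-form and the symmetry wall form w_S = e₄ − e₃. Then, with respect to the wall scalar product, (w_E|w_E) = 3(d−4)/(d−1), (w_S|w_S) = 2, (w_E|w_S) = −1, and hence (w_E|w_S)² / ((w_E|w_E)(w_S|w_S)) = (1/6)(1 + 3/(d−4)); this is the squared cosine of the dihedral angle between the electric wall and the adjacent symmetry wall of the Einstein–3-form billiard in spacetime dimension D = d+1 ≥ 8. -/
import Mathlib


/-- The wall scalar product on `ℝ^d` (no dilatons):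
`(w|w') = Σᵢ wᵢw'ᵢ − (1/(d−1)) (Σᵢ wᵢ)(Σᵢ w'ᵢ)`. -/
noncomputable def wallIP (d : ℕ) (w w' : Fin d → ℝ) : ℝ :=
  (∑ i, w i * w' i) - (1 / ((d : ℝ) - 1)) * (∑ i, w i) * (∑ i, w' i)

lemma sum_lt3 (d : ℕ) (hd : 3 ≤ d) :
    ∑ i ∈ Finset.range d, (if i < 3 then (1:ℝ) else 0) = 3 := by
  rw [← Finset.sum_filter]
  have : (Finset.range d).filter (· < 3) = Finset.range 3 := by
    ext x; simp; omega
  rw [this]; norm_num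

lemma sum_eq_single (d k : ℕ) (hk : k < d) (c : ℝ) :
    ∑ i ∈ Finset.range d, (if i = k then c else 0) = c := by
  rw [Finset.sum_ite_eq' (Finset.range d) k (fun _ => c)]
  simp [hk]

/-- For `d ≥ 5`, the electric wall form `w_E = e₁ + e₂ + e₃` of a 3-form and the
adjacent symmetry wall form `w_S = e₄ − e₃` satisfy `(w_E|w_E) = 3(d−4)/(d−1)`,
`(w_S|w_S) = 2`, `(w_E|w_S) = −1`, and hence the squared cosine of their dihedral
angle is `(w_E|w_S)²/((w_E|w_E)(w_S|w_S)) = (1/6)(1 + 3/(d−4))`. -/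
theorem electric_symmetry_angle (d : ℕ) (hd : 5 ≤ d)
    (wE wS : Fin d → ℝ)
    (hE : ∀ i, wE i = if i.val < 3 then 1 else 0)
    (hS : ∀ i, wS i = (if i.val = 3 then 1 else 0) - (if i.val = 2 then 1 else 0)) :
    wallIP d wE wE = 3 * ((d : ℝ) - 4) / ((d : ℝ) - 1) ∧
    wallIP d wS wS = 2 ∧
    wallIP d wE wS = -1 ∧
    (wallIP d wE wS) ^ 2 / (wallIP d wE wE * wallIP d wS wS)
      = (1 / 6) * (1 + 3 / ((d : ℝ) - 4)) := by
  have hd' : (5:ℝ) ≤ (d:ℝ) := by exact_mod_cast hd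
  have hd1 : ((d:ℝ) - 1) ≠ 0 := by linarith
  have hd4 : ((d:ℝ) - 4) ≠ 0 := by linarith
  have hEsum : ∑ i, wE i = 3 := by
    simp only [hE]
    rw [Fin.sum_univ_eq_sum_range (fun i => if i < 3 then (1:ℝ) else 0)]
    exact sum_lt3 d (by omega)
  have hEE : ∑ i, wE i * wE i = 3 := by
    simp only [hE]
    have : ∀ i : Fin d, (if i.val < 3 then (1:ℝ) else 0) * (if i.val < 3 then (1:ℝ) else 0)
        = (if i.val < 3 then (1:ℝ) else 0) := by
      intro i; split_ifs <;> norm_num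
    rw [Finset.sum_congr rfl (fun i _ => this i),
      Fin.sum_univ_eq_sum_range (fun i => if i < 3 then (1:ℝ) else 0)]
    exact sum_lt3 d (by omega)
  have hSsum : ∑ i, wS i = 0 := by
    simp only [hS, Finset.sum_sub_distrib]
    rw [Fin.sum_univ_eq_sum_range (fun i => if i = 3 then (1:ℝ) else 0),
      Fin.sum_univ_eq_sum_range (fun i => if i = 2 then (1:ℝ) else 0),
      sum_eq_single d 3 (by omega), sum_eq_single d 2 (by omega)]
    ring
  have hSS : ∑ i, wS i * wS i = 2 := by
    simp only [hS]
    have : ∀ i : Fin d,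
        ((if i.val = 3 then (1:ℝ) else 0) - (if i.val = 2 then 1 else 0)) *
        ((if i.val = 3 then (1:ℝ) else 0) - (if i.val = 2 then 1 else 0))
        = (if i.val = 3 then (1:ℝ) else 0) + (if i.val = 2 then 1 else 0) := by
      intro i; split_ifs <;> first | omega | norm_num
    rw [Finset.sum_congr rfl (fun i _ => this i), Finset.sum_add_distrib,
      Fin.sum_univ_eq_sum_range (fun i => if i = 3 then (1:ℝ) else 0),
      Fin.sum_univ_eq_sum_range (fun i => if i = 2 then (1:ℝ) else 0),
      sum_eq_single d 3 (by omega), sum_eq_single d 2 (by omega)]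
    norm_num
  have hES : ∑ i, wE i * wS i = -1 := by
    simp only [hE, hS]
    have : ∀ i : Fin d,
        (if i.val < 3 then (1:ℝ) else 0) *
        ((if i.val = 3 then (1:ℝ) else 0) - (if i.val = 2 then 1 else 0))
        = -(if i.val = 2 then (1:ℝ) else 0) := by
      intro i; split_ifs <;> first | omega | norm_num
    rw [Finset.sum_congr rfl (fun i _ => this i), Finset.sum_neg_distrib,
      Fin.sum_univ_eq_sum_range (fun i => if i = 2 then (1:ℝ) else 0),
      sum_eq_single d 2 (by omega)]
  have e1 : wallIP d wE wE = 3 * ((d : ℝ) - 4) / ((d : ℝ) - 1) := by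
    rw [wallIP, hEsum, hEE]; field_simp; ring
  have e2 : wallIP d wS wS = 2 := by
    rw [wallIP, hSsum, hSS]; ring
  have e3 : wallIP d wE wS = -1 := by
    rw [wallIP, hEsum, hSsum, hES]; ring
  refine ⟨e1, e2, e3, ?_⟩
  rw [e1, e2, e3]
  field_simp
  ring
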